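/- arXiv:1904.05850 — 4 statements merged into one kernel-verified Lean document; each statement's English description precedes it below -/
import Mathlib

section
/- (Stein–Chen Poisson approximation.) Let J be a finite index set and for each j ∈ J let 1_j be a Bernoulli random variable with p_j = P(1_j = 1) ∈ (0,1). Let W = Σ_{j∈J} 1_j and let Z be a Poisson random variable with mean E[Z] = E[W] = λ. For each j choose a neighborhood B_j ⊂ J containing j. Then d_TV(L(W), L(Z)) ≤ 2(b_1 + b_2 + b_3), where b_1 = Σ_{j∈J} Σ_{k∈B_j} p_j p_k, b_2 = Σ_{j∈J} Σ_{k∈B_j\{j}} P(1_j = 1_k = 1), and b_3 = Σ_{j∈J} E| E[1_j − p_j | σ(1_k : k ∈ J \ B_j)] |. -/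
/-!
Stein's method. For `A ⊆ ℕ`, the solution `f` of the Stein equation
`λ f (n + 1) - n f n = 1_A n - Po(λ)(A)` with `f 0 = 0` satisfies `|f| ≤ 1`. This reduces to
`Po(λ)[0, n] · Po(λ)(n, ∞) ≤ λ Po(λ){n}`, which follows by comparing the Cauchy product of the
two truncated exponential series with `λ ^ (n + 1) / n! · exp λ` coefficientwise. Hence
`P(W ∈ A) - Po(λ)(A) = E[λ f (W + 1) - W f W] = ∑ⱼ E[pⱼ f (W + 1) - 1ⱼ f W]`.
In the `j`-th summand, compare with `f (Vⱼ + 1)`, where `Vⱼ = ∑_{k ∉ Bⱼ} 1ₖ`. Since `|f| ≤ 1`,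
replacing `f (W + 1)` by it costs at most twice the number of indicators in `Bⱼ` that are on,
which gives `b₁`; on `{1ⱼ = 1}`, replacing `f W` costs at most twice the number of those other
than `1ⱼ`, which gives `b₂`. What remains is `E[f (Vⱼ + 1) (1ⱼ - pⱼ)]`. As `Vⱼ` is measurable
for `σ(1ₖ : k ∉ Bⱼ)`, this equals `E[f (Vⱼ + 1) E[1ⱼ - pⱼ | σ(1ₖ : k ∉ Bⱼ)]]`, which is at most
the `j`-th term of `b₃`.
-/

open MeasureTheory ProbabilityTheory Set
open scoped ENNReal NNReal

noncomputable section

/-- Total variation distance between two measures: `sup_A |μ(A) − ν(A)|`. -/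
def tvDist {α : Type*} [MeasurableSpace α] (μ ν : Measure α) : ℝ :=
  ⨆ A : Set α, |(μ A).toReal - (ν A).toReal|

open scoped Nat

theorem Nat.sum_range_choose_mul_factorial_le (m n : ℕ) :
    (∑ j ∈ Finset.range (min m n + 1), (m + n + 1).choose j) * (m ! * n !) ≤ (m + n + 1)! := by
  wlog hmn : n ≤ m generalizing m n
  · simpa only [min_comm, add_comm n m, mul_comm] using this n m (by omega)
  have hchoose : ∀ j ∈ Finset.range (n + 1), (m + n + 1).choose j ≤ (m + n + 1).choose n := by
    intro j hj
    induction hjn : n - j generalizing j with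
    | zero => rw [show j = n by grind]
    | succ d ih =>
      exact (Nat.choose_le_succ_of_lt_half_left (by omega)).trans (ih (j + 1) (by grind) (by omega))
  rw [min_eq_right hmn]
  calc (∑ j ∈ Finset.range (n + 1), (m + n + 1).choose j) * (m ! * n !)
      ≤ (n + 1) * (m + n + 1).choose n * (m ! * n !) := by
        gcongr
        simpa using Finset.sum_le_sum hchoose
    _ ≤ (m + 1) * (m + n + 1).choose n * (m ! * n !) := by gcongr
    _ = (m + n + 1).choose n * n ! * (m + 1)! := by rw [Nat.factorial_succ]; ring
    _ = (m + n + 1)! := by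
      rw [← Nat.choose_mul_factorial_mul_factorial (show n ≤ m + n + 1 by omega)]
      congr 2; omega

theorem sum_range_mul_pow_div_factorial_le {x : ℝ} (hx : 0 ≤ x) (n t : ℕ) :
    ∑ j ∈ Finset.range (t + 1), (if j ≤ n then x ^ j / j ! else 0) *
        (x ^ (t - j + n + 1) / (t - j + n + 1)!) ≤ x ^ (n + 1) / n ! * (x ^ t / t !) := by
  set N := n + t + 1
  have hterm : ∀ j ∈ Finset.range (t + 1),
      (if j ≤ n then x ^ j / j ! else 0) * (x ^ (t - j + n + 1) / (t - j + n + 1)!) =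
        if j ≤ n then x ^ N / N ! * N.choose j else 0 := by
    intro j hj
    split_ifs with hjn
    · have hjN : j ≤ N := by grind
      rw [Nat.cast_choose ℝ hjN, show t - j + n + 1 = N - j by grind]
      field_simp
      rw [← pow_add, Nat.add_sub_cancel' hjN]
    · simp
  have hrange : (Finset.range (t + 1)).filter (· ≤ n) = Finset.range (min n t + 1) := by
    ext j; simp only [Finset.mem_filter, Finset.mem_range]; omega
  have hcount : (∑ j ∈ Finset.range (min n t + 1), (N.choose j : ℝ)) * (n ! * t !) ≤ N ! := by
    exact_mod_cast Nat.sum_range_choose_mul_factorial_le n t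
  rw [Finset.sum_congr rfl hterm, ← Finset.sum_filter, hrange, ← Finset.mul_sum,
    div_mul_div_comm, ← pow_add, show n + 1 + t = N by omega, div_mul_eq_mul_div,
    div_le_div_iff₀ (by positivity) (by positivity)]
  calc x ^ N * (∑ j ∈ Finset.range (min n t + 1), (N.choose j : ℝ)) * (n ! * t !)
      = x ^ N * ((∑ j ∈ Finset.range (min n t + 1), (N.choose j : ℝ)) * (n ! * t !)) := by ring
    _ ≤ x ^ N * N ! := by gcongr

theorem sum_range_pow_div_factorial_mul_tsum_le {x : ℝ} (hx : 0 ≤ x) (n : ℕ) :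
    (∑ j ∈ Finset.range (n + 1), x ^ j / j !) * ∑' k, x ^ (k + n + 1) / (k + n + 1)! ≤
      x ^ (n + 1) / n ! * Real.exp x := by
  have hexp : HasSum (fun n => x ^ n / n !) (Real.exp x) := by
    rw [Real.exp_eq_exp_ℝ]; exact NormedSpace.expSeries_div_hasSum_exp x
  have hhead :
      ∑' j, (if j ≤ n then x ^ j / j ! else 0) = ∑ j ∈ Finset.range (n + 1), x ^ j / j ! := by
    rw [tsum_eq_sum (s := Finset.range (n + 1)) (by grind)]
    exact Finset.sum_congr rfl (by grind)
  have hhead_norm : Summable fun j => ‖if j ≤ n then x ^ j / j ! else 0‖ :=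
    summable_of_ne_finset_zero (s := Finset.range (n + 1)) (by grind [norm_zero])
  have htail_norm : Summable fun k => ‖x ^ (k + n + 1) / (k + n + 1)!‖ := by
    simpa [Real.norm_of_nonneg, hx, abs_of_nonneg, add_assoc] using
      (summable_nat_add_iff (n + 1)).mpr hexp.summable
  rw [← hhead]
  refine hasSum_le ?_ (hasSum_sum_range_mul_of_summable_norm hhead_norm htail_norm)
    (hexp.mul_left _)
  exact sum_range_mul_pow_div_factorial_le hx n

theorem abs_sum_range_sub_tsum_mul_le {q h : ℕ → ℝ} (hq0 : ∀ k, 0 ≤ q k) (hq : HasSum q 1)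
    (h0 : ∀ k, 0 ≤ h k) (h1 : ∀ k, h k ≤ 1) (N : ℕ) :
    |∑ k ∈ Finset.range N, (h k - ∑' j, h j * q j) * q k| ≤
      (∑ k ∈ Finset.range N, q k) * ∑' k, q (k + N) := by
  have hhq : ∀ k, h k * q k ≤ q k := fun k => mul_le_of_le_one_left (hq0 k) (h1 k)
  have hhq0 : ∀ k, 0 ≤ h k * q k := fun k => mul_nonneg (h0 k) (hq0 k)
  have hhq_sum : Summable fun k => h k * q k := hq.summable.of_nonneg_of_le hhq0 hhq
  have hsplit := hq.summable.sum_add_tsum_nat_add N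
  rw [hq.tsum_eq] at hsplit
  rw [← hhq_sum.sum_add_tsum_nat_add N]
  set u := ∑ k ∈ Finset.range N, q k
  set t := ∑' k, q (k + N)
  set a := ∑ k ∈ Finset.range N, h k * q k
  set b := ∑' k, h (k + N) * q (k + N)
  have ha0 : 0 ≤ a := Finset.sum_nonneg fun k _ => hhq0 k
  have hau : a ≤ u := Finset.sum_le_sum fun k _ => hhq k
  have hb0 : 0 ≤ b := tsum_nonneg fun k => hhq0 _
  have hbt : b ≤ t := ((summable_nat_add_iff N).mpr hhq_sum).tsum_le_tsum (fun k => hhq _)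
    ((summable_nat_add_iff N).mpr hq.summable)
  have hsum : ∑ k ∈ Finset.range N, (h k - (a + b)) * q k = a * t - b * u := by
    simp only [sub_mul, Finset.sum_sub_distrib, ← Finset.mul_sum]
    linear_combination (-a) * hsplit
  have hu0 : 0 ≤ u := ha0.trans hau
  have ht0 : 0 ≤ t := hb0.trans hbt
  rw [hsum, abs_le]
  constructor <;> nlinarith [mul_nonneg ha0 ht0, mul_le_mul_of_nonneg_right hau ht0,
    mul_nonneg hb0 hu0, mul_le_mul_of_nonneg_right hbt hu0]

theorem hasSum_poissonMeasure_real_singleton (r : ℝ≥0) :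
    HasSum (fun k => (poissonMeasure r).real {k}) 1 := by
  simpa only [poissonMeasure_real_singleton] using hasSum_one_poissonMeasure r

theorem integral_poissonMeasure_eq_tsum (r : ℝ≥0) (h : ℕ → ℝ) :
    ∫ x, h x ∂poissonMeasure r = ∑' k, h k * (poissonMeasure r).real {k} := by
  simp [integral_poissonMeasure, poissonMeasure_real_singleton, mul_comm]

theorem poissonMeasure_zero : poissonMeasure 0 = Measure.dirac 0 :=
  Measure.ext_of_singleton fun n => by cases n <;> simp [poissonMeasure_singleton]

theorem succ_mul_poissonMeasure_real_singleton_succ (r : ℝ≥0) (n : ℕ) :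
    (n + 1) * (poissonMeasure r).real {n + 1} = r * (poissonMeasure r).real {n} := by
  simp only [poissonMeasure_real_singleton, Nat.factorial_succ, Nat.cast_mul, pow_succ]
  field_simp
  push_cast
  ring

theorem sum_range_mul_tsum_poissonMeasure_real_le (r : ℝ≥0) (n : ℕ) :
    (∑ k ∈ Finset.range (n + 1), (poissonMeasure r).real {k}) *
        ∑' k, (poissonMeasure r).real {k + (n + 1)} ≤ r * (poissonMeasure r).real {n} := by
  simp only [poissonMeasure_real_singleton, mul_div_assoc, ← Finset.mul_sum, tsum_mul_left]
  calc Real.exp (-r) * (∑ k ∈ Finset.range (n + 1), (r : ℝ) ^ k / k !) *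
        (Real.exp (-r) * ∑' k, (r : ℝ) ^ (k + (n + 1)) / (k + (n + 1))!)
      = Real.exp (-r) * Real.exp (-r) * ((∑ k ∈ Finset.range (n + 1), (r : ℝ) ^ k / k !) *
        ∑' k, (r : ℝ) ^ (k + n + 1) / (k + n + 1)!) := by simp only [← add_assoc]; ring
    _ ≤ Real.exp (-r) * Real.exp (-r) * ((r : ℝ) ^ (n + 1) / n ! * Real.exp r) :=
      mul_le_mul_of_nonneg_left (sum_range_pow_div_factorial_mul_tsum_le r.2 n) (by positivity)
    _ = r * (Real.exp (-r) * ((r : ℝ) ^ n / n !)) := by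
      have : Real.exp (-r) * Real.exp r = 1 := by rw [← Real.exp_add, neg_add_cancel, Real.exp_zero]
      linear_combination (Real.exp (-r) * (r : ℝ) ^ (n + 1) / n !) * this

/-- Multiplying the Stein equation `r f (n + 1) - n f n = h n - E h(Z)`, `Z ∼ Po(r)`, by
`P(Z = n)` and using `n P(Z = n) = r P(Z = n - 1)` makes it telescope. -/
def poissonSteinSolution (r : ℝ≥0) (h : ℕ → ℝ) : ℕ → ℝ
  | 0 => 0
  | n + 1 => (∑ k ∈ Finset.range (n + 1),
      (h k - ∫ x, h x ∂poissonMeasure r) * (poissonMeasure r).real {k}) /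
        (r * (poissonMeasure r).real {n})

theorem poissonSteinSolution_equation {r : ℝ≥0} (hr : 0 < r) (h : ℕ → ℝ) (n : ℕ) :
    r * poissonSteinSolution r h (n + 1) - n * poissonSteinSolution r h n =
      h n - ∫ x, h x ∂poissonMeasure r := by
  set q := fun k => (poissonMeasure r).real {k}
  set D := fun m => ∑ k ∈ Finset.range m, (h k - ∫ x, h x ∂poissonMeasure r) * q k
  have hq : ∀ k, q k ≠ 0 := fun k => (poissonMeasure_real_singleton_pos k hr).ne'
  have hsucc : r * poissonSteinSolution r h (n + 1) = D (n + 1) / q n := by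
    simp only [poissonSteinSolution, D, q]
    field_simp [hq n, hr.ne']
  have hself : n * poissonSteinSolution r h n = D n / q n := by
    cases n with
    | zero => simp [D, poissonSteinSolution]
    | succ m =>
      simp only [poissonSteinSolution, D, q, ← succ_mul_poissonMeasure_real_singleton_succ]
      push_cast
      field_simp [hq m, hq (m + 1)]
  rw [hsucc, hself, ← sub_div]
  simp only [D, Finset.sum_range_succ, add_sub_cancel_left]
  field_simp [hq n]

theorem abs_poissonSteinSolution_le_one (r : ℝ≥0) {h : ℕ → ℝ} (h0 : ∀ k, 0 ≤ h k)
    (h1 : ∀ k, h k ≤ 1) (n : ℕ) : |poissonSteinSolution r h n| ≤ 1 := by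
  cases n with
  | zero => simp [poissonSteinSolution]
  | succ n =>
    have hden : 0 ≤ (r : ℝ) * (poissonMeasure r).real {n} := mul_nonneg r.2 measureReal_nonneg
    rw [poissonSteinSolution, abs_div, abs_of_nonneg hden, integral_poissonMeasure_eq_tsum]
    exact div_le_one_of_le₀ ((abs_sum_range_sub_tsum_mul_le (fun k => measureReal_nonneg)
      (hasSum_poissonMeasure_real_singleton r) h0 h1 (n + 1)).trans
      (sum_range_mul_tsum_poissonMeasure_real_le r n)) hden

theorem abs_sub_le_two_mul_of_abs_le_one {f : ℕ → ℝ} (hf : ∀ n, |f n| ≤ 1) (a b : ℕ) :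
    |f (a + b) - f a| ≤ 2 * b := by
  rcases Nat.eq_zero_or_pos b with rfl | hb
  · simp
  · have : (1 : ℝ) ≤ b := by exact_mod_cast hb
    linarith [abs_sub (f (a + b)) (f a), hf (a + b), hf a]

theorem abs_integral_mul_le_integral_abs_condExp {Ω : Type*} {m m₀ : MeasurableSpace Ω}
    {μ : Measure Ω} [IsFiniteMeasure μ] (hm : m ≤ m₀) {g h : Ω → ℝ}
    (hg : StronglyMeasurable[m] g) (hg1 : ∀ ω, |g ω| ≤ 1) (hh : Integrable h μ) :
    |∫ ω, g ω * h ω ∂μ| ≤ ∫ ω, |μ[h|m] ω| ∂μ := by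
  have hpull : μ[fun ω => g ω * h ω|m] =ᵐ[μ] fun ω => g ω * μ[h|m] ω :=
    condExp_stronglyMeasurable_mul_of_bound hm hg hh 1 (ae_of_all _ hg1)
  rw [← integral_condExp hm, integral_congr_ae hpull, ← Real.norm_eq_abs]
  refine norm_integral_le_of_norm_le integrable_condExp.abs (ae_of_all _ fun ω => ?_)
  rw [Real.norm_eq_abs, abs_mul]
  exact mul_le_of_le_one_left (abs_nonneg _) (hg1 ω)

theorem integral_natCast_eq_measureReal {Ω : Type*} [MeasurableSpace Ω] {P : Measure Ω}
    [IsFiniteMeasure P] {X : Ω → ℕ} (hX : Measurable X) (hX1 : ∀ ω, X ω ≤ 1) :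
    ∫ ω, (X ω : ℝ) ∂P = P.real {ω | X ω = 1} := by
  rw [← integral_indicator_one (s := {ω | X ω = 1}) (hX (measurableSet_singleton 1))]
  congr with ω
  rcases Nat.le_one_iff_eq_zero_or_eq_one.mp (hX1 ω) with h | h <;> simp [h]

theorem tvDist_self {α : Type*} [MeasurableSpace α] (μ : Measure α) : tvDist μ μ = 0 := by
  simp [tvDist]

theorem map_eq_dirac_zero_of_integral_eq_zero {Ω : Type*} [MeasurableSpace Ω] {P : Measure Ω}
    [IsProbabilityMeasure P] {W : Ω → ℕ} (hW : Integrable (fun ω => (W ω : ℝ)) P)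
    (h0 : ∫ ω, (W ω : ℝ) ∂P = 0) : P.map W = Measure.dirac 0 := by
  have hae : W =ᵐ[P] fun _ => 0 := by
    filter_upwards [(integral_eq_zero_iff_of_nonneg (fun ω => Nat.cast_nonneg _) hW).mp h0]
      with ω hω
    simpa using hω
  rw [Measure.map_congr hae, Measure.map_const, measure_univ, one_smul]

theorem integral_natCast_mul_eq_measureReal {Ω : Type*} [MeasurableSpace Ω] {P : Measure Ω}
    [IsFiniteMeasure P] {X Y : Ω → ℕ} (hX : Measurable X) (hY : Measurable Y)
    (hX1 : ∀ ω, X ω ≤ 1) (hY1 : ∀ ω, Y ω ≤ 1) :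
    ∫ ω, (X ω * Y ω : ℝ) ∂P = P.real {ω | X ω = 1 ∧ Y ω = 1} := by
  simpa only [Nat.cast_mul, mul_eq_one] using integral_natCast_eq_measureReal (P := P)
    (X := fun ω => X ω * Y ω) (by fun_prop) fun ω => Nat.mul_le_mul (hX1 ω) (hY1 ω)

theorem measureReal_map_sub_poissonMeasure_eq_integral {Ω : Type*} [MeasurableSpace Ω]
    {P : Measure Ω} [IsProbabilityMeasure P] {W : Ω → ℕ} (hW : Measurable W) {r : ℝ≥0}
    (hr : 0 < r) (A : Set ℕ) :
    (P.map W).real A - (poissonMeasure r).real A =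
      ∫ ω, (r * poissonSteinSolution r (A.indicator 1) (W ω + 1) -
        W ω * poissonSteinSolution r (A.indicator 1) (W ω)) ∂P := by
  have hA : MeasurableSet (W ⁻¹' A) := hW .of_discrete
  have hcomp : (fun ω => A.indicator (1 : ℕ → ℝ) (W ω)) = (W ⁻¹' A).indicator 1 := rfl
  simp_rw [poissonSteinSolution_equation hr,
    integral_indicator_one (MeasurableSet.of_discrete (s := A))]
  rw [integral_sub (hcomp ▸ (integrable_const 1).indicator hA) (integrable_const _), hcomp,
    integral_indicator_one hA, integral_const, map_measureReal_apply hW .of_discrete]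
  simp

section Neighbourhood

variable {J : Type*} [Fintype J] [DecidableEq J] {f : ℕ → ℝ}

theorem abs_sub_sum_compl_le (hf : ∀ n, |f n| ≤ 1) (x : J → ℕ) (B : Finset J) :
    |f (∑ k, x k + 1) - f (∑ k ∈ Bᶜ, x k + 1)| ≤ 2 * ∑ k ∈ B, (x k : ℝ) := by
  rw [← Finset.sum_add_sum_compl B x, add_comm (∑ k ∈ B, x k), add_right_comm]
  exact_mod_cast abs_sub_le_two_mul_of_abs_le_one hf _ _

theorem abs_mul_sub_sum_compl_le (hf : ∀ n, |f n| ≤ 1) {x : J → ℕ} {j : J} (hx : x j ≤ 1)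
    {B : Finset J} (hj : j ∈ B) :
    |x j * (f (∑ k, x k) - f (∑ k ∈ Bᶜ, x k + 1))| ≤ 2 * ∑ k ∈ B.erase j, (x j * x k : ℝ) := by
  rcases Nat.le_one_iff_eq_zero_or_eq_one.mp hx with hx0 | hx1
  · simp [hx0]
  · rw [← Finset.sum_add_sum_compl B x, ← Finset.add_sum_erase B x hj, hx1]
    simp only [Nat.cast_one, one_mul]
    rw [add_comm (1 + _), ← add_assoc]
    exact_mod_cast abs_sub_le_two_mul_of_abs_le_one hf _ _

end Neighbourhood

section SteinChen

variable {Ω J : Type*} [mΩ : MeasurableSpace Ω] {P : Measure Ω} [IsProbabilityMeasure P]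
  [Fintype J] {I : J → Ω → ℕ} {p : J → ℝ} {f : ℕ → ℝ}

theorem integrable_natCast {X : Ω → ℕ} (hX : Measurable X) (hX1 : ∀ ω, X ω ≤ 1) :
    Integrable (fun ω => (X ω : ℝ)) P :=
  .of_bound (by fun_prop) 1 (ae_of_all _ fun ω => by simpa using hX1 ω)

theorem integrable_natCast_mul_natCast {X Y : Ω → ℕ} (hX : Measurable X) (hY : Measurable Y)
    (hX1 : ∀ ω, X ω ≤ 1) (hY1 : ∀ ω, Y ω ≤ 1) : Integrable (fun ω => (X ω * Y ω : ℝ)) P := by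
  simpa using integrable_natCast (P := P) (X := fun ω => X ω * Y ω) (by fun_prop)
    fun ω => Nat.mul_le_mul (hX1 ω) (hY1 ω)

theorem integral_steinSummand_eq {W X : Ω → ℕ} (hW : Measurable W) (hX : Measurable X)
    (hX1 : ∀ ω, X ω ≤ 1) (hf : ∀ n, |f n| ≤ 1) (c : ℝ) {g : Ω → ℝ} (hg : Measurable g)
    (hg1 : ∀ ω, |g ω| ≤ 1) :
    ∫ ω, (c * f (W ω + 1) - X ω * f (W ω)) ∂P =
      c * ∫ ω, (f (W ω + 1) - g ω) ∂P - ∫ ω, X ω * (f (W ω) - g ω) ∂P -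
        ∫ ω, g ω * ((X ω : ℝ) - c) ∂P := by
  have hdiff : ∀ a ω, |f a - g ω| ≤ 2 := fun a ω =>
    (abs_sub _ _).trans (by linarith [hf a, hg1 ω])
  have h1 : Integrable (fun ω => c * (f (W ω + 1) - g ω)) P :=
    (Integrable.of_bound (by fun_prop) 2 (ae_of_all _ fun ω => hdiff _ ω)).const_mul c
  have h2 : Integrable (fun ω => X ω * (f (W ω) - g ω)) P :=
    (integrable_natCast hX hX1).mul_bdd (by fun_prop : Measurable _).aestronglyMeasurable
      (ae_of_all _ fun ω => hdiff _ ω)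
  have h3 : Integrable (fun ω => g ω * ((X ω : ℝ) - c)) P :=
    ((integrable_natCast hX hX1).sub (integrable_const c)).bdd_mul hg.aestronglyMeasurable
      (ae_of_all _ hg1)
  rw [← integral_const_mul, ← integral_sub h1 h2, ← integral_sub (by exact h1.sub h2) h3]
  congr with ω
  ring

theorem abs_integral_steinSummand_le [DecidableEq J] (hI : ∀ j, Measurable (I j))
    (hI1 : ∀ j ω, I j ω ≤ 1) (hp : ∀ j, ∫ ω, (I j ω : ℝ) ∂P = p j) (hf : ∀ n, |f n| ≤ 1)
    {B : Finset J} {j : J} (hj : j ∈ B) :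
    |∫ ω, (p j * f (∑ k, I k ω + 1) - I j ω * f (∑ k, I k ω)) ∂P| ≤
      2 * ∑ k ∈ B, p j * p k + 2 * ∑ k ∈ B.erase j, ∫ ω, (I j ω * I k ω : ℝ) ∂P +
        |∫ ω, f (∑ k ∈ Bᶜ, I k ω + 1) * ((I j ω : ℝ) - p j) ∂P| := by
  set g := fun ω => f (∑ k ∈ Bᶜ, I k ω + 1)
  have hX : ∀ k, Integrable (fun ω => (I k ω : ℝ)) P := fun k => integrable_natCast (hI k) (hI1 k)
  have hXX : ∀ k, Integrable (fun ω => (I j ω * I k ω : ℝ)) P := fun k =>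
    integrable_natCast_mul_natCast (hI j) (hI k) (hI1 j) (hI1 k)
  have hp0 : 0 ≤ p j := hp j ▸ integral_nonneg fun ω => Nat.cast_nonneg _
  have hT1 : |p j * ∫ ω, (f (∑ k, I k ω + 1) - g ω) ∂P| ≤ 2 * ∑ k ∈ B, p j * p k := by
    rw [abs_mul, abs_of_nonneg hp0, ← Finset.mul_sum, mul_left_comm, ← Real.norm_eq_abs]
    refine mul_le_mul_of_nonneg_left ((norm_integral_le_of_norm_le
      ((integrable_finsetSum B fun k _ => hX k).const_mul 2)
      (ae_of_all _ fun ω => abs_sub_sum_compl_le hf (I · ω) B)).trans_eq ?_) hp0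
    rw [integral_const_mul, integral_finsetSum B fun k _ => hX k]
    simp only [hp]
  have hT2 : |∫ ω, I j ω * (f (∑ k, I k ω) - g ω) ∂P| ≤
      2 * ∑ k ∈ B.erase j, ∫ ω, (I j ω * I k ω : ℝ) ∂P := by
    rw [← Real.norm_eq_abs, ← integral_finsetSum _ fun k _ => hXX k, ← integral_const_mul]
    exact norm_integral_le_of_norm_le ((integrable_finsetSum _ fun k _ => hXX k).const_mul 2)
      (ae_of_all _ fun ω => abs_mul_sub_sum_compl_le hf (x := (I · ω)) (hI1 j ω) hj)
  rw [integral_steinSummand_eq (by fun_prop) (hI j) (hI1 j) hf (p j) (g := g) (by fun_prop)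
    fun ω => hf _]
  exact (abs_sub _ _).trans (add_le_add_left ((abs_sub _ _).trans (add_le_add hT1 hT2)) _)

theorem abs_integral_steinSummand_le_condExp [DecidableEq J] (hI : ∀ j, Measurable (I j))
    (hI1 : ∀ j ω, I j ω ≤ 1) (hp : ∀ j, ∫ ω, (I j ω : ℝ) ∂P = p j) (hf : ∀ n, |f n| ≤ 1)
    {m : MeasurableSpace Ω} (hm : m ≤ mΩ) {B : Finset J}
    (hBm : ∀ k ∉ B, Measurable[m] (I k)) {j : J} (hj : j ∈ B) :
    |∫ ω, (p j * f (∑ k, I k ω + 1) - I j ω * f (∑ k, I k ω)) ∂P| ≤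
      2 * ∑ k ∈ B, p j * p k + 2 * ∑ k ∈ B.erase j, ∫ ω, (I j ω * I k ω : ℝ) ∂P +
        ∫ ω, |P[fun ω => (I j ω : ℝ) - p j|m] ω| ∂P := by
  have hg : StronglyMeasurable[m] fun ω => f (∑ k ∈ Bᶜ, I k ω + 1) :=
    (Measurable.of_discrete.comp ((Finset.measurable_sum _ fun k hk =>
      hBm k (Finset.mem_compl.mp hk)).add_const 1)).stronglyMeasurable
  exact (abs_integral_steinSummand_le (mΩ := mΩ) hI hI1 hp hf hj).trans (add_le_add le_rfl
    (abs_integral_mul_le_integral_abs_condExp hm hg (fun ω => hf _)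
      (h := fun ω => (I j ω : ℝ) - p j)
      ((integrable_natCast (mΩ := mΩ) (hI j) (hI1 j)).sub (integrable_const _))))

theorem integral_steinOperator_eq_sum (hI : ∀ j, Measurable (I j)) (hI1 : ∀ j ω, I j ω ≤ 1)
    (hf : ∀ n, |f n| ≤ 1) :
    ∫ ω, ((∑ j, p j) * f (∑ k, I k ω + 1) - (∑ k, I k ω : ℕ) * f (∑ k, I k ω)) ∂P =
      ∑ j, ∫ ω, (p j * f (∑ k, I k ω + 1) - I j ω * f (∑ k, I k ω)) ∂P := by
  have hfW : ∀ a : ℕ → ℕ, Integrable (fun ω => f (a (∑ k, I k ω))) P := fun a =>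
    .of_bound (by fun_prop) 1 (ae_of_all _ fun ω => hf _)
  rw [← integral_finsetSum _ fun j _ => ?_]
  · congr with ω
    push_cast
    rw [Finset.sum_mul, Finset.sum_mul, ← Finset.sum_sub_distrib]
  · exact ((hfW (· + 1)).const_mul (p j)).sub ((integrable_natCast (hI j) (hI1 j)).mul_bdd
      (hfW id).aestronglyMeasurable (ae_of_all _ fun ω => hf _))

theorem abs_map_sum_sub_poissonMeasure_le [DecidableEq J] (hI : ∀ j, Measurable (I j))
    (hI1 : ∀ j ω, I j ω ≤ 1) (hp : ∀ j, ∫ ω, (I j ω : ℝ) ∂P = p j) {r : ℝ≥0} (hr : 0 < r)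
    (hr_sum : (r : ℝ) = ∑ j, p j) {B : J → Finset J} (hB : ∀ j, j ∈ B j)
    {m : J → MeasurableSpace Ω} (hm : ∀ j, m j ≤ mΩ) (hBm : ∀ j, ∀ k ∉ B j, Measurable[m j] (I k))
    (A : Set ℕ) :
    |(P.map fun ω => ∑ j, I j ω).real A - (poissonMeasure r).real A| ≤
      ∑ j, (2 * ∑ k ∈ B j, p j * p k + 2 * ∑ k ∈ (B j).erase j, ∫ ω, (I j ω * I k ω : ℝ) ∂P +
        ∫ ω, |P[fun ω => (I j ω : ℝ) - p j|m j] ω| ∂P) := by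
  have hf := abs_poissonSteinSolution_le_one r (h := A.indicator 1)
    (fun k => Set.indicator_nonneg (fun _ _ => zero_le_one) k)
    (fun k => Set.indicator_le_self' (fun _ _ => zero_le_one) k)
  rw [measureReal_map_sub_poissonMeasure_eq_integral (by fun_prop) hr, hr_sum,
    integral_steinOperator_eq_sum hI hI1 hf]
  exact (Finset.abs_sum_le_sum_abs _ _).trans (Finset.sum_le_sum fun j _ =>
    abs_integral_steinSummand_le_condExp hI hI1 hp hf (hm j) (hBm j) (hB j))

end SteinChen

theorem stein_chen_poisson_approximation_general
    {Ω : Type*} [MeasurableSpace Ω] (P : Measure Ω) [IsProbabilityMeasure P]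
    {J : Type*} [Fintype J] [DecidableEq J]
    (I : J → Ω → ℕ) (hImeas : ∀ j, Measurable (I j))
    (hBernoulli : ∀ j ω, I j ω ≤ 1)
    (p : J → ℝ) (hp : ∀ j, p j = (P {ω | I j ω = 1}).toReal)
    (B : J → Finset J) (hB : ∀ j, j ∈ B j)
    (W : Ω → ℕ) (hW : ∀ ω, W ω = ∑ j, I j ω)
    (lam : ℝ≥0) (hlam : (lam : ℝ) = ∫ ω, (W ω : ℝ) ∂P) :
    tvDist (P.map W) (poissonMeasure lam) ≤
      2 * ((∑ j, ∑ k ∈ B j, p j * p k)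
        + (∑ j, ∑ k ∈ (B j).erase j, (P {ω | I j ω = 1 ∧ I k ω = 1}).toReal)
        + (∑ j, ∫ ω,
            |(P[(fun ω' => (I j ω' : ℝ) - p j) |
                ⨆ k ∈ ((Finset.univ \ B j : Finset J) : Set J),
                  MeasurableSpace.comap (I k) (inferInstance : MeasurableSpace ℕ)]) ω| ∂P)) := by
  obtain rfl : W = fun ω => ∑ j, I j ω := funext hW
  have hmean : ∀ j, ∫ ω, (I j ω : ℝ) ∂P = p j := fun j =>
    (integral_natCast_eq_measureReal (hImeas j) (hBernoulli j)).trans (hp j).symm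
  have hlam_sum : (lam : ℝ) = ∑ j, p j := by
    simp only [hlam, ← hmean, Nat.cast_sum]
    exact integral_finsetSum _ fun j _ => integrable_natCast (hImeas j) (hBernoulli j)
  rcases eq_zero_or_pos lam with rfl | hlam_pos
  · have hWint : Integrable (fun ω => ((∑ j, I j ω : ℕ) : ℝ)) P := by
      simpa using integrable_finsetSum _ fun j _ => integrable_natCast (hImeas j) (hBernoulli j)
    rw [map_eq_dirac_zero_of_integral_eq_zero hWint (by simpa using hlam.symm),
      poissonMeasure_zero, tvDist_self]
    simp only [hp]
    positivity
  have hpair : ∀ j k, ∫ ω, (I j ω * I k ω : ℝ) ∂P = (P {ω | I j ω = 1 ∧ I k ω = 1}).toReal :=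
    fun j k => integral_natCast_mul_eq_measureReal (hImeas j) (hImeas k) (hBernoulli j)
      (hBernoulli k)
  refine ciSup_le fun A => ?_
  rw [← measureReal_def, ← measureReal_def]
  refine (abs_map_sum_sub_poissonMeasure_le hImeas hBernoulli hmean hlam_pos hlam_sum hB
    (fun j => iSup₂_le fun k _ => (hImeas k).comap_le)
    (fun j k hk => (comap_measurable (I k)).mono (le_iSup₂_of_le k
      (Finset.mem_coe.mpr (Finset.mem_sdiff.mpr ⟨Finset.mem_univ k, hk⟩)) le_rfl) le_rfl)
    A).trans ?_
  simp only [Finset.sum_add_distrib, ← Finset.mul_sum, hpair]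
  rw [mul_add, mul_add]
  gcongr
  exact le_mul_of_one_le_left (by positivity) one_le_two

/-- **Stein–Chen Poisson approximation** (Arratia–Goldstein–Gordon).
For dependent Bernoulli variables `I j`, `j ∈ J`, with `W = Σ_j I j` and `Z` Poisson with
mean `λ = E[W]`, one has `d_TV(L(W), L(Z)) ≤ 2(b₁ + b₂ + b₃)`. -/
theorem stein_chen_poisson_approximation
    {Ω : Type*} [MeasurableSpace Ω] (P : Measure Ω) [IsProbabilityMeasure P]
    {J : Type*} [Fintype J] [DecidableEq J]
    (I : J → Ω → ℕ) (hImeas : ∀ j, Measurable (I j))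
    (hBernoulli : ∀ j ω, I j ω ≤ 1)
    (p : J → ℝ) (hp : ∀ j, p j = (P {ω | I j ω = 1}).toReal)
    (hp0 : ∀ j, 0 < p j) (hp1 : ∀ j, p j < 1)
    (B : J → Finset J) (hB : ∀ j, j ∈ B j)
    (W : Ω → ℕ) (hW : ∀ ω, W ω = ∑ j, I j ω)
    (lam : ℝ≥0) (hlam : (lam : ℝ) = ∫ ω, (W ω : ℝ) ∂P) :
    tvDist (P.map W) (poissonMeasure lam) ≤
      2 * ((∑ j, ∑ k ∈ B j, p j * p k)
        + (∑ j, ∑ k ∈ (B j).erase j, (P {ω | I j ω = 1 ∧ I k ω = 1}).toReal)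
        + (∑ j, ∫ ω,
            |(P[(fun ω' => (I j ω' : ℝ) - p j) |
                ⨆ k ∈ ((Finset.univ \ B j : Finset J) : Set J),
                  MeasurableSpace.comap (I k) (inferInstance : MeasurableSpace ℕ)]) ω| ∂P)) :=
  stein_chen_poisson_approximation_general P I hImeas hBernoulli p hp B hB W hW lam hlam
end
end

section
/- Let f : ℝ^d → [0,∞) be a probability density and suppose there exists r > 0 such that ∫ ‖x‖^{d+r} f(x) dx < ∞. Then for every θ ∈ (0, (d+r)/(2d+r)), the integral ∫_{ℝ^d} f(x)^{1−θ} dx is finite. -/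
/-!
Write `f ^ (1 - θ) = (f g) ^ (1 - θ) * (g ^ (-(1 - θ) / θ)) ^ θ` with the weight
`g x = (1 + ‖x‖) ^ (d + r)`. Weighted AM–GM bounds this by `f g + (1 + ‖x‖) ^ (-s)` with
`s = (d + r) (1 - θ) / θ`; the first term is integrable by the moment assumption, the second
because `θ < (d + r) / (2 d + r)` says exactly that `s > d`.
-/

open MeasureTheory Real Module

namespace Real

theorem rpow_one_sub_le_mul_add_rpow_neg {a g θ : ℝ} (ha : 0 ≤ a) (hg : 0 < g) (hθ0 : 0 < θ)
    (hθ1 : θ ≤ 1) :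
    a ^ (1 - θ) ≤ (1 - θ) * (a * g) + θ * g ^ (-((1 - θ) / θ)) := by
  have hsplit : a ^ (1 - θ) = (a * g) ^ (1 - θ) * (g ^ (-((1 - θ) / θ))) ^ θ := by
    rw [mul_rpow ha hg.le, ← rpow_mul hg.le, neg_mul, div_mul_cancel₀ _ hθ0.ne', rpow_neg hg.le,
      mul_assoc, mul_inv_cancel₀ (rpow_pos_of_pos hg _).ne', mul_one]
  rw [hsplit]
  exact geom_mean_le_arith_mean2_weighted (by linarith) hθ0.le (by positivity) (by positivity)
    (by ring)

theorem one_add_rpow_le_two_rpow_mul {t p : ℝ} (ht : 0 ≤ t) (hp : 0 ≤ p) :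
    (1 + t) ^ p ≤ 2 ^ p * (1 + t ^ p) := calc
  (1 + t) ^ p ≤ (2 * max 1 t) ^ p := by gcongr; linarith [le_max_left 1 t, le_max_right 1 t]
  _ = 2 ^ p * max 1 (t ^ p) := by
    rw [mul_rpow zero_le_two (by positivity), rpow_max zero_le_one ht hp, one_rpow]
  _ ≤ 2 ^ p * (1 + t ^ p) := by gcongr; exact max_le_add_of_nonneg zero_le_one (by positivity)

end Real

section

variable {E : Type*} [NormedAddCommGroup E] [MeasurableSpace E] {μ : Measure E} {f : E → ℝ}

theorem MeasureTheory.Integrable.mul_one_add_norm_rpow [OpensMeasurableSpace E] {p : ℝ}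
    (hf : Integrable f μ) (hp : 0 ≤ p) (hf0 : ∀ᵐ x ∂μ, 0 ≤ f x)
    (hmom : Integrable (fun x => ‖x‖ ^ p * f x) μ) :
    Integrable (fun x => f x * (1 + ‖x‖) ^ p) μ := by
  have hcont : Continuous fun x : E => (1 + ‖x‖) ^ p := by fun_prop
  refine ((hf.add hmom).const_mul (2 ^ p)).mono'
    (hf.aestronglyMeasurable.mul hcont.aestronglyMeasurable) ?_
  filter_upwards [hf0] with x hx
  rw [Real.norm_of_nonneg (by positivity)]
  calc f x * (1 + ‖x‖) ^ p ≤ f x * (2 ^ p * (1 + ‖x‖ ^ p)) := by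
        gcongr; exact one_add_rpow_le_two_rpow_mul (norm_nonneg x) hp
    _ = 2 ^ p * (f x + ‖x‖ ^ p * f x) := by ring

variable [NormedSpace ℝ E] [FiniteDimensional ℝ E] [BorelSpace E] [μ.IsAddHaarMeasure]

theorem MeasureTheory.Integrable.rpow_one_sub_of_integrable_norm_rpow_mul {p θ : ℝ}
    (hf : Integrable f μ) (hf0 : ∀ᵐ x ∂μ, 0 ≤ f x) (hmom : Integrable (fun x => ‖x‖ ^ p * f x) μ)
    (hθ0 : 0 < θ) (hθ1 : θ ≤ 1) (hdim : (finrank ℝ E : ℝ) < p * ((1 - θ) / θ)) :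
    Integrable (fun x => f x ^ (1 - θ)) μ := by
  have hp : 0 ≤ p :=
    (pos_of_mul_pos_left ((Nat.cast_nonneg _).trans_lt hdim) (div_nonneg (by linarith) hθ0.le)).le
  have hweight := (hf.mul_one_add_norm_rpow hp hf0 hmom).const_mul (1 - θ)
  have hdecay := (integrable_one_add_norm (μ := μ) hdim).const_mul θ
  refine (hweight.add hdecay).mono'
    (hf.aestronglyMeasurable.aemeasurable.pow_const _).aestronglyMeasurable ?_
  filter_upwards [hf0] with x hx
  have hg : 0 < (1 + ‖x‖) ^ p := by positivity
  rw [Pi.add_apply, Real.norm_of_nonneg (by positivity)]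
  convert rpow_one_sub_le_mul_add_rpow_neg hx hg hθ0 hθ1 using 3
  rw [← rpow_mul (by positivity), neg_mul_eq_mul_neg]

end

theorem density_power_integrable_general
    {d : ℕ} (f : EuclideanSpace ℝ (Fin d) → ℝ)
    (hf0 : ∀ x, 0 ≤ f x) (hfprob : ∫ x, f x = 1)
    (r : ℝ) (hr : 0 < r)
    (hmom : Integrable (fun x : EuclideanSpace ℝ (Fin d) => ‖x‖ ^ ((d : ℝ) + r) * f x)) :
    ∀ θ ∈ Set.Ioo (0 : ℝ) (((d : ℝ) + r) / (2 * d + r)),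
      Integrable (fun x : EuclideanSpace ℝ (Fin d) => f x ^ (1 - θ)) := by
  rintro θ ⟨hθ0, hθ⟩
  have hf : Integrable f := Integrable.of_integral_ne_zero (by simp [hfprob])
  have hd : (0 : ℝ) ≤ d := d.cast_nonneg
  rw [lt_div_iff₀ (by positivity)] at hθ
  refine hf.rpow_one_sub_of_integrable_norm_rpow_mul (ae_of_all _ hf0) hmom hθ0 (by nlinarith) ?_
  rw [finrank_euclideanSpace_fin, mul_div_assoc', lt_div_iff₀ hθ0]
  nlinarith

/-- **Finite moments imply integrability of `f^{1−θ}`**: if `∫ ‖x‖^{d+r} f(x) dx < ∞` for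
some `r > 0`, then `∫ f(x)^{1−θ} dx < ∞` for every `θ ∈ (0, (d+r)/(2d+r))`. -/
theorem density_power_integrable
    {d : ℕ} (hd : 0 < d) (f : EuclideanSpace ℝ (Fin d) → ℝ)
    (hf0 : ∀ x, 0 ≤ f x) (hfmeas : Measurable f) (hfprob : ∫ x, f x = 1)
    (r : ℝ) (hr : 0 < r)
    (hmom : Integrable (fun x : EuclideanSpace ℝ (Fin d) => ‖x‖ ^ ((d : ℝ) + r) * f x)) :
    ∀ θ ∈ Set.Ioo (0 : ℝ) (((d : ℝ) + r) / (2 * d + r)),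
      Integrable (fun x : EuclideanSpace ℝ (Fin d) => f x ^ (1 - θ)) :=
  density_power_integrable_general f hf0 hfprob r hr hmom
end

section
/- Let f : ℝ^d → [0,∞) be a probability density satisfying ∫ ‖x‖^{d+r} f(x) dx < ∞ for some r > 0, let X' be a random vector with density f, and set g(x) = 1 + E‖X' − x‖^d. Then for every θ ∈ (0, (d+r)/(2d+r)), the integral ∫_{ℝ^d} log(2 g(x)) f(x)^{1−θ} dx is finite. -/
/-!
Since `‖y - x‖ ≤ (1 + ‖y‖) (1 + ‖x‖)`, the moment of order `d + r` gives `g(x) ≤ C (1 + ‖x‖)^d`,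
so `log (2 g)` grows more slowly than any power `(1 + ‖x‖)^ε`. Comparing `f(x)` with
`(1 + ‖x‖)^(-s)` gives `f^(1-θ) ≤ f (1 + ‖x‖)^(sθ) + (1 + ‖x‖)^(-s(1-θ))`. After multiplying by
`(1 + ‖x‖)^ε`, the first term is integrable by the moment bound once `ε + sθ ≤ d + r`, the second
once `s(1-θ) - ε > d`, and such `s` and `ε > 0` exist exactly when `θ (2d + r) < d + r`.
-/

open MeasureTheory Real Set

noncomputable section

/-- `g(x) = 1 + E‖X' − x‖^d` for `X' ∼ f`. -/
def gMom {d : ℕ} (f : EuclideanSpace ℝ (Fin d) → ℝ) (x : EuclideanSpace ℝ (Fin d)) : ℝ :=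
  1 + ∫ y, ‖y - x‖ ^ (d : ℕ) * f y

lemma log_le_of_le_mul_pow {u K t ε : ℝ} {n : ℕ} (hu : 0 < u) (hK : 1 ≤ K) (ht : 1 ≤ t)
    (hε : 0 < ε) (h : u ≤ K * t ^ n) : log u ≤ (log K + n / ε) * t ^ ε := by
  have ht₀ : 0 < t := one_pos.trans_le ht
  calc log u ≤ log (K * t ^ n) := log_le_log hu h
    _ = log K + n * log t := by rw [log_mul (by positivity) (by positivity), log_pow]
    _ ≤ log K * t ^ ε + n * (t ^ ε / ε) :=
        add_le_add (le_mul_of_one_le_right (log_nonneg hK) (one_le_rpow ht hε.le))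
          (mul_le_mul_of_nonneg_left (log_le_rpow_div ht₀.le hε) (by positivity))
    _ = (log K + n / ε) * t ^ ε := by ring

lemma rpow_one_sub_le_mul_rpow_neg_add_rpow {a b θ : ℝ} (ha : 0 ≤ a) (hb : 0 < b)
    (hθ₀ : 0 ≤ θ) (hθ₁ : θ ≤ 1) : a ^ (1 - θ) ≤ a * b ^ (-θ) + b ^ (1 - θ) := by
  rcases le_or_gt a b with hab | hab
  · have : 0 ≤ a * b ^ (-θ) := by positivity
    linarith [rpow_le_rpow ha hab (sub_nonneg.2 hθ₁)]
  · have ha₀ : 0 < a := hb.trans hab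
    calc a ^ (1 - θ) = a * a ^ (-θ) := by rw [sub_eq_add_neg, rpow_add ha₀, rpow_one]
      _ ≤ a * b ^ (-θ) :=
          mul_le_mul_of_nonneg_left (rpow_le_rpow_of_nonpos hb hab.le (neg_nonpos.2 hθ₀)) ha
      _ ≤ a * b ^ (-θ) + b ^ (1 - θ) := le_add_of_nonneg_right (by positivity)

lemma one_add_rpow_le {t q : ℝ} (ht : 0 ≤ t) (hq : 0 ≤ q) :
    (1 + t) ^ q ≤ 2 ^ q * (1 + t ^ q) := by
  have h2q : (0 : ℝ) < 2 ^ q := by positivity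
  have htq : 0 ≤ t ^ q := by positivity
  rcases le_total t 1 with h | h
  · calc (1 + t) ^ q ≤ 2 ^ q := rpow_le_rpow (by positivity) (by linarith) hq
      _ ≤ 2 ^ q * (1 + t ^ q) := le_mul_of_one_le_right h2q.le (by linarith)
  · calc (1 + t) ^ q ≤ (2 * t) ^ q := rpow_le_rpow (by positivity) (by linarith) hq
      _ = 2 ^ q * t ^ q := mul_rpow zero_le_two ht
      _ ≤ 2 ^ q * (1 + t ^ q) := by gcongr; linarith

section Moments

variable {E : Type*} [NormedAddCommGroup E] [MeasurableSpace E] [OpensMeasurableSpace E]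
  {μ : Measure E} {f : E → ℝ}

lemma integrable_one_add_norm_rpow_mul {q : ℝ} (hq : 0 ≤ q) (hf : Integrable f μ)
    (hmom : Integrable (fun x ↦ ‖x‖ ^ q * f x) μ) :
    Integrable (fun x ↦ (1 + ‖x‖) ^ q * f x) μ := by
  refine Integrable.mono' (g := fun x ↦ 2 ^ q * (‖f x‖ + ‖‖x‖ ^ q * f x‖))
    ((hf.norm.add hmom.norm).const_mul _)
    ((by fun_prop : Measurable fun x : E ↦ (1 + ‖x‖) ^ q).aestronglyMeasurable.mul
      hf.aestronglyMeasurable) (ae_of_all _ fun x ↦ ?_)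
  simp only [norm_mul, norm_of_nonneg (by positivity : (0 : ℝ) ≤ (1 + ‖x‖) ^ q),
    norm_of_nonneg (by positivity : (0 : ℝ) ≤ ‖x‖ ^ q)]
  calc (1 + ‖x‖) ^ q * ‖f x‖ ≤ 2 ^ q * (1 + ‖x‖ ^ q) * ‖f x‖ :=
        mul_le_mul_of_nonneg_right (one_add_rpow_le (norm_nonneg x) hq) (norm_nonneg _)
    _ = 2 ^ q * (‖f x‖ + ‖x‖ ^ q * ‖f x‖) := by ring

variable [NormedSpace ℝ E] [FiniteDimensional ℝ E] [BorelSpace E] [μ.IsAddHaarMeasure]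

lemma integrable_one_add_norm_rpow_mul_rpow_one_sub {θ s ε : ℝ} (hf₀ : ∀ x, 0 ≤ f x)
    (hf : AEStronglyMeasurable f μ) (hθ₀ : 0 ≤ θ) (hθ₁ : θ ≤ 1)
    (hmom : Integrable (fun x ↦ (1 + ‖x‖) ^ (ε + s * θ) * f x) μ)
    (hdecay : (Module.finrank ℝ E : ℝ) < s * (1 - θ) - ε) :
    Integrable (fun x ↦ (1 + ‖x‖) ^ ε * f x ^ (1 - θ)) μ := by
  refine (hmom.add (integrable_one_add_norm hdecay)).mono'
    ((by fun_prop : Measurable fun x : E ↦ (1 + ‖x‖) ^ ε).aestronglyMeasurable.mul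
      (hf.aemeasurable.pow_const _).aestronglyMeasurable) (ae_of_all _ fun x ↦ ?_)
  have ht : 0 < 1 + ‖x‖ := by positivity
  rw [norm_of_nonneg (by have := hf₀ x; positivity)]
  calc (1 + ‖x‖) ^ ε * f x ^ (1 - θ)
      ≤ (1 + ‖x‖) ^ ε * (f x * ((1 + ‖x‖) ^ (-s)) ^ (-θ) + ((1 + ‖x‖) ^ (-s)) ^ (1 - θ)) :=
        mul_le_mul_of_nonneg_left
          (rpow_one_sub_le_mul_rpow_neg_add_rpow (hf₀ x) (by positivity) hθ₀ hθ₁) (by positivity)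
    _ = (1 + ‖x‖) ^ (ε + s * θ) * f x + (1 + ‖x‖) ^ (-(s * (1 - θ) - ε)) := by
        rw [← rpow_mul ht.le, ← rpow_mul ht.le, mul_add, ← mul_assoc, mul_comm _ (f x),
          mul_assoc, ← rpow_add ht, ← rpow_add ht]
        ring_nf

end Moments

section gMom

variable {d : ℕ} {f : EuclideanSpace ℝ (Fin d) → ℝ}

lemma one_le_gMom (hf₀ : ∀ x, 0 ≤ f x) (x : EuclideanSpace ℝ (Fin d)) : 1 ≤ gMom f x :=
  le_add_of_nonneg_right (integral_nonneg fun y ↦ mul_nonneg (by positivity) (hf₀ y))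

lemma measurable_gMom (hf : Measurable f) : Measurable (gMom f) :=
  measurable_const.add <| StronglyMeasurable.measurable <|
    StronglyMeasurable.integral_prod_right' (f := fun p ↦ ‖p.2 - p.1‖ ^ d * f p.2)
      (by fun_prop : Measurable fun p : _ × _ ↦ ‖p.2 - p.1‖ ^ d * f p.2).stronglyMeasurable

lemma gMom_le {q : ℝ} (hf₀ : ∀ x, 0 ≤ f x) (hq : d ≤ q)
    (hmom : Integrable (fun y ↦ (1 + ‖y‖) ^ q * f y)) (x : EuclideanSpace ℝ (Fin d)) :
    gMom f x ≤ (1 + ∫ y, (1 + ‖y‖) ^ q * f y) * (1 + ‖x‖) ^ d := by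
  have hpt : ∀ y, ‖y - x‖ ^ d * f y ≤ (1 + ‖x‖) ^ d * ((1 + ‖y‖) ^ q * f y) := fun y ↦ by
    have hdist : ‖y - x‖ ≤ (1 + ‖y‖) * (1 + ‖x‖) := by
      nlinarith [norm_sub_le y x, norm_nonneg x, norm_nonneg y]
    have hpow : (1 + ‖y‖) ^ d ≤ (1 + ‖y‖) ^ q := by
      rw [← rpow_natCast]
      exact rpow_le_rpow_of_exponent_le (by linarith [norm_nonneg y]) hq
    calc ‖y - x‖ ^ d * f y ≤ ((1 + ‖y‖) * (1 + ‖x‖)) ^ d * f y := by gcongr; exact hf₀ y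
      _ ≤ (1 + ‖x‖) ^ d * ((1 + ‖y‖) ^ q * f y) := by
        rw [mul_pow, mul_comm ((1 + ‖y‖) ^ d), mul_assoc]
        gcongr
        exact hf₀ y
  have hint : ∫ y, ‖y - x‖ ^ d * f y ≤ (1 + ‖x‖) ^ d * ∫ y, (1 + ‖y‖) ^ q * f y :=
    (integral_mono_of_nonneg (ae_of_all _ fun y ↦ mul_nonneg (by positivity) (hf₀ y))
      (hmom.const_mul _) (ae_of_all _ hpt)).trans_eq (integral_const_mul _ _)
  have hone : 1 ≤ (1 + ‖x‖) ^ d := one_le_pow₀ (by linarith [norm_nonneg x])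
  unfold gMom
  linarith

end gMom

theorem log_g_density_power_integrable_general
    {d : ℕ} (f : EuclideanSpace ℝ (Fin d) → ℝ)
    (hf0 : ∀ x, 0 ≤ f x) (hfmeas : Measurable f) (hfprob : ∫ x, f x = 1)
    (r : ℝ) (hr : 0 < r)
    (hmom : Integrable (fun x : EuclideanSpace ℝ (Fin d) => ‖x‖ ^ ((d : ℝ) + r) * f x)) :
    ∀ θ ∈ Set.Ioo (0 : ℝ) (((d : ℝ) + r) / (2 * d + r)),
      Integrable (fun x : EuclideanSpace ℝ (Fin d) =>
        Real.log (2 * gMom f x) * f x ^ (1 - θ)) := by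
  rintro θ ⟨hθ₀, hθ⟩
  have hd₀ : (0 : ℝ) ≤ d := d.cast_nonneg
  have hmom' : Integrable fun y : EuclideanSpace ℝ (Fin d) ↦ (1 + ‖y‖) ^ ((d : ℝ) + r) * f y :=
    integrable_one_add_norm_rpow_mul (by linarith)
      (Integrable.of_integral_ne_zero (by simp [hfprob])) hmom
  set M := ∫ y, (1 + ‖y‖) ^ ((d : ℝ) + r) * f y
  have hM : 0 ≤ M := integral_nonneg fun y ↦ mul_nonneg (by positivity) (hf0 y)
  have hgap : θ * (2 * d + r) < d + r := (lt_div_iff₀ (by linarith)).1 hθ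
  -- `ε` is half the gap, and `s = (d + r - ε) / θ` makes `ε + s θ = d + r`.
  set ε := (d + r - θ * (2 * d + r)) / 2 with hε_def
  have hε : 0 < ε := by linarith
  have hθ₁ : θ ≤ 1 := by nlinarith
  have hweight : Integrable fun x : EuclideanSpace ℝ (Fin d) ↦ (1 + ‖x‖) ^ ε * f x ^ (1 - θ) := by
    refine integrable_one_add_norm_rpow_mul_rpow_one_sub (s := (d + r - ε) / θ) hf0
      hfmeas.aestronglyMeasurable hθ₀.le hθ₁ ?_ ?_
    · rwa [div_mul_cancel₀ _ hθ₀.ne', add_sub_cancel]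
    · rw [finrank_euclideanSpace_fin, lt_sub_iff_add_lt, div_mul_eq_mul_div, lt_div_iff₀ hθ₀]
      linarith
  refine (hweight.const_mul (log (2 * (1 + M)) + d / ε)).mono'
    ((measurable_const.mul (measurable_gMom hfmeas)).log.mul
      (hfmeas.pow_const _)).aestronglyMeasurable (ae_of_all _ fun x ↦ ?_)
  have hg := one_le_gMom hf0 x
  rw [norm_of_nonneg (mul_nonneg (log_nonneg (by linarith)) (rpow_nonneg (hf0 x) _)), ← mul_assoc]
  refine mul_le_mul_of_nonneg_right (log_le_of_le_mul_pow (by linarith) (by linarith)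
    (by linarith [norm_nonneg x]) hε ?_) (rpow_nonneg (hf0 x) _)
  calc 2 * gMom f x ≤ 2 * ((1 + M) * (1 + ‖x‖) ^ d) := by
        gcongr; exact gMom_le hf0 (by linarith) hmom' x
    _ = 2 * (1 + M) * (1 + ‖x‖) ^ d := by ring

/-- **Integrability of `log(2g) f^{1−θ}`**: if `∫ ‖x‖^{d+r} f(x) dx < ∞` for some `r > 0`,
then `∫ log(2 g(x)) f(x)^{1−θ} dx < ∞` for every `θ ∈ (0, (d+r)/(2d+r))`. -/
theorem log_g_density_power_integrable
    {d : ℕ} (hd : 0 < d) (f : EuclideanSpace ℝ (Fin d) → ℝ)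
    (hf0 : ∀ x, 0 ≤ f x) (hfmeas : Measurable f) (hfprob : ∫ x, f x = 1)
    (r : ℝ) (hr : 0 < r)
    (hmom : Integrable (fun x : EuclideanSpace ℝ (Fin d) => ‖x‖ ^ ((d : ℝ) + r) * f x)) :
    ∀ θ ∈ Set.Ioo (0 : ℝ) (((d : ℝ) + r) / (2 * d + r)),
      Integrable (fun x : EuclideanSpace ℝ (Fin d) =>
        Real.log (2 * gMom f x) * f x ^ (1 - θ)) :=
  log_g_density_power_integrable_general f hf0 hfmeas hfprob r hr hmom

end
end

section
/- For all μ_1, μ_2 ≥ 0, the total variation distance between the Poisson distribution with mean μ_1 and the Poisson distribution with mean μ_2 satisfies d_TV(Pois(μ_1), Pois(μ_2)) ≤ |μ_1 − μ_2|. -/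
open MeasureTheory ProbabilityTheory
open scoped NNReal

noncomputable section

/-!
Coupling: `Pois(r + δ)` is the law of `X + Y` for independent `X ~ Pois(r)`, `Y ~ Pois(δ)`, so
`|P(X ∈ A) - P(X + Y ∈ A)| ≤ P(Y ≠ 0) = 1 - e^{-δ} ≤ δ` for every set `A`.
-/

open Set

section TotalVariation

variable {α : Type*} [MeasurableSpace α]

lemma tvDist_comm (μ ν : Measure α) : tvDist μ ν = tvDist ν μ := by
  simp only [tvDist, abs_sub_comm]

/-- A set has the same `μ`- and `ν`-measure as the intersection of its two measurable hulls. -/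
lemma tvDist_le_of_forall_measurableSet {μ ν : Measure α} {c : ℝ}
    (h : ∀ A, MeasurableSet A → |μ.real A - ν.real A| ≤ c) : tvDist μ ν ≤ c := by
  refine ciSup_le fun A => ?_
  set B := toMeasurable μ A ∩ toMeasurable ν A
  have hAB : A ⊆ B := subset_inter (subset_toMeasurable μ A) (subset_toMeasurable ν A)
  have hμ : μ B = μ A := le_antisymm
    ((measure_mono inter_subset_left).trans_eq (measure_toMeasurable A)) (measure_mono hAB)
  have hν : ν B = ν A := le_antisymm
    ((measure_mono inter_subset_right).trans_eq (measure_toMeasurable A)) (measure_mono hAB)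
  simpa only [measureReal_def, hμ, hν] using
    h B ((measurableSet_toMeasurable μ A).inter (measurableSet_toMeasurable ν A))

lemma tvDist_map_le_measureReal_ne {Ω : Type*} [MeasurableSpace Ω] (ρ : Measure Ω)
    [IsFiniteMeasure ρ] {X Y : Ω → α} (hX : Measurable X) (hY : Measurable Y) :
    tvDist (ρ.map X) (ρ.map Y) ≤ ρ.real {ω | X ω ≠ Y ω} := by
  refine tvDist_le_of_forall_measurableSet fun A hA => ?_
  have sdiff_le (U V : Ω → α) :
      ρ.real (U ⁻¹' A) - ρ.real (V ⁻¹' A) ≤ ρ.real {ω | U ω ≠ V ω} :=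
    (le_measureReal_sdiff ..).trans <| measureReal_mono fun ω ⟨hU, hV⟩ (h : U ω = V ω) =>
      hV (show V ω ∈ A from h ▸ hU)
  rw [map_measureReal_apply hX hA, map_measureReal_apply hY hA, abs_sub_le_iff]
  exact ⟨sdiff_le X Y, by simpa only [ne_comm] using sdiff_le Y X⟩

lemma tvDist_conv_le {M : Type*} [AddMonoid M] [MeasurableSpace M] [MeasurableAdd₂ M]
    (μ ν : Measure M) [IsProbabilityMeasure μ] [IsProbabilityMeasure ν] :
    tvDist μ (μ ∗ ν) ≤ ν.real {0}ᶜ := by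
  calc tvDist μ (μ ∗ ν)
      = tvDist ((μ.prod ν).map Prod.fst) ((μ.prod ν).map fun p => p.1 + p.2) := by
        rw [Measure.map_fst_prod, measure_univ, one_smul, Measure.conv]
    _ ≤ (μ.prod ν).real {p | p.1 ≠ p.1 + p.2} :=
        tvDist_map_le_measureReal_ne _ measurable_fst measurable_add
    _ ≤ (μ.prod ν).real (univ ×ˢ {0}ᶜ) :=
        measureReal_mono fun p hp => ⟨trivial, fun h0 => hp (by simp [mem_singleton_iff.mp h0])⟩
    _ = ν.real {0}ᶜ := by
        simp only [measureReal_def, Measure.prod_prod, measure_univ, one_mul]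

end TotalVariation

lemma tvDist_poissonMeasure_add_le (r δ : ℝ≥0) :
    tvDist (poissonMeasure r) (poissonMeasure (r + δ)) ≤ 1 - Real.exp (-δ) := by
  rw [← poissonMeasure_conv_poissonMeasure]
  refine (tvDist_conv_le _ _).trans_eq ?_
  rw [probReal_compl_eq_one_sub (measurableSet_singleton 0), poissonMeasure_real_singleton]
  simp

/-- **TV distance between Poisson laws**: `d_TV(Pois(μ₁), Pois(μ₂)) ≤ |μ₁ − μ₂|`. -/
theorem poisson_tv_le_abs_sub (μ₁ μ₂ : ℝ≥0) :
    tvDist (poissonMeasure μ₁) (poissonMeasure μ₂) ≤ |(μ₁ : ℝ) - (μ₂ : ℝ)| := by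
  wlog h : μ₁ ≤ μ₂ generalizing μ₁ μ₂
  · rw [tvDist_comm, abs_sub_comm]
    exact this μ₂ μ₁ (le_of_not_ge h)
  obtain ⟨δ, rfl⟩ := exists_add_of_le h
  calc tvDist (poissonMeasure μ₁) (poissonMeasure (μ₁ + δ))
      ≤ 1 - Real.exp (-δ) := tvDist_poissonMeasure_add_le μ₁ δ
    _ ≤ δ := by linarith [Real.add_one_le_exp (-(δ : ℝ))]
    _ = |(μ₁ : ℝ) - ((μ₁ + δ : ℝ≥0) : ℝ)| := by
        rw [NNReal.coe_add, sub_add_cancel_left, abs_neg, NNReal.abs_eq]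

end
end
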